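/- For every cost C ≥ 0 and every distortion level D ∈ [0, D_max(C)], the minimum defining R(D,C) is attained by a conditional pmf P_{T|X} for which the distortion constraint holds with equality, i.e., E[d(X,T(Y))] = D. -/

import Mathlib

open Finset

noncomputable section

/-- A probability mass function on a finite alphabet. -/
def IsPMF {α : Type} [Fintype α] (p : α → ℝ) : Prop :=
  (∀ a, 0 ≤ p a) ∧ ∑ a, p a = 1

/-- A conditional probability mass function. -/
def IsCondPMF {α β : Type} [Fintype α] [Fintype β] (p : α → β → ℝ) : Prop :=
  ∀ a, IsPMF (p a)

/-- A Shannon strategy: an estimate function `Y → Xh` together with an action in `A`. -/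
abbrev Strat (Y Xh A : Type) : Type := (Y → Xh) × A

variable {X Y A Xh : Type} [Fintype X] [Fintype Y] [Fintype A] [Fintype Xh]
  [DecidableEq X] [DecidableEq Y] [DecidableEq A] [DecidableEq Xh]


/-- Joint pmf `P_{X,Y,T}(x,y,t) = P_X(x) P_{T|X}(t|x) P_{Y|X,A}(y|x,a(t))`. -/
def pXYT (PX : X → ℝ) (PW : A → X → Y → ℝ) (PT : X → Strat Y Xh A → ℝ)
    (x : X) (y : Y) (t : Strat Y Xh A) : ℝ :=
  PX x * PT x t * PW t.2 x y

/-- Action marginal `P_A`. -/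
def pA (PX : X → ℝ) (PT : X → Strat Y Xh A → ℝ) (a : A) : ℝ :=
  ∑ x, ∑ t, if t.2 = a then PX x * PT x t else 0

/-- Marginal `P_{X,A}`. -/
def pXA (PX : X → ℝ) (PT : X → Strat Y Xh A → ℝ) (x : X) (a : A) : ℝ :=
  ∑ t, if t.2 = a then PX x * PT x t else 0

/-- Marginal `P_{Y,A}`. -/
def pYA (PX : X → ℝ) (PW : A → X → Y → ℝ) (PT : X → Strat Y Xh A → ℝ)
    (y : Y) (a : A) : ℝ :=
  ∑ x, ∑ t, if t.2 = a then pXYT PX PW PT x y t else 0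

/-- Marginal `P_{X,Y,A}`. -/
def pXYA (PX : X → ℝ) (PW : A → X → Y → ℝ) (PT : X → Strat Y Xh A → ℝ)
    (x : X) (y : Y) (a : A) : ℝ :=
  ∑ t, if t.2 = a then pXYT PX PW PT x y t else 0

/-- Marginal `P_{Y,T}`. -/
def pYT (PX : X → ℝ) (PW : A → X → Y → ℝ) (PT : X → Strat Y Xh A → ℝ)
    (y : Y) (t : Strat Y Xh A) : ℝ :=
  ∑ x, pXYT PX PW PT x y t

/-- Mutual information `I(X; a(T))` (base-2 logarithms). -/
def IXA (PX : X → ℝ) (PT : X → Strat Y Xh A → ℝ) : ℝ :=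
  ∑ x, ∑ a, pXA PX PT x a * Real.logb 2 (pXA PX PT x a / (PX x * pA PX PT a))

/-- Conditional mutual information `I(X; T | Y, a(T))` (base-2 logarithms). -/
def IXTcondYA (PX : X → ℝ) (PW : A → X → Y → ℝ) (PT : X → Strat Y Xh A → ℝ) : ℝ :=
  ∑ x, ∑ y, ∑ t, pXYT PX PW PT x y t *
    Real.logb 2 (pXYT PX PW PT x y t * pYA PX PW PT y t.2 /
      (pXYA PX PW PT x y t.2 * pYT PX PW PT y t))

/-- Average distortion `E[d(X, T(Y))]`. -/
def expDist (PX : X → ℝ) (PW : A → X → Y → ℝ) (dist : X → Xh → ℝ)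
    (PT : X → Strat Y Xh A → ℝ) : ℝ :=
  ∑ x, ∑ y, ∑ t, pXYT PX PW PT x y t * dist x (t.1 y)

/-- Average action cost `E[Δ(a(T))]`. -/
def expCost (PX : X → ℝ) (cost : A → ℝ) (PT : X → Strat Y Xh A → ℝ) : ℝ :=
  ∑ x, ∑ t, PX x * PT x t * cost t.2

/-- The rate-distortion-cost function in the Shannon-strategy formulation. -/
def RDC (PX : X → ℝ) (PW : A → X → Y → ℝ) (dist : X → Xh → ℝ) (cost : A → ℝ)
    (D C : ℝ) : ℝ :=
  sInf { r : ℝ | ∃ PT : X → Strat Y Xh A → ℝ, IsCondPMF PT ∧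
    expDist PX PW dist PT ≤ D ∧ expCost PX cost PT ≤ C ∧
    r = IXA PX PT + IXTcondYA PX PW PT }
/-- `D_max(C)`: the minimum average distortion achievable with actions chosen
independently of the source, under average cost at most `C`. -/
def Dmax (PX : X → ℝ) (PW : A → X → Y → ℝ) (dist : X → Xh → ℝ) (cost : A → ℝ)
    (C : ℝ) : ℝ :=
  sInf { v : ℝ | ∃ pT : Strat Y Xh A → ℝ, IsPMF pT ∧
    (∑ t, cost t.2 * pT t) ≤ C ∧
    v = ∑ t, ∑ x, ∑ y, PX x * pT t * PW t.2 x y * dist x (t.1 y) }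

/-!
The rate `I(X;A) + I(X;T|Y,A)` equals `H(X) + H(Y|X,A) - H(Y|A) - H(X|Y,T)`. As a function of
`P_{T|X}` the term `H(Y|X,A)` is linear, while `-H(Y|A)` and `-H(X|Y,T)` are convex by the log-sum
inequality; so the rate is convex, and it vanishes at every strategy chosen independently of the
source. It is also continuous on the compact set of feasible `P_{T|X}`, hence has a minimizer `P`
under `E d ≤ D`. Mixing `P` with a zero-cost strategy that ignores the source, whose distortion is
at least `D_max(C) ≥ D`, brings the distortion to exactly `D` without increasing the rate.
-/

set_option linter.unusedSectionVars false

-- Since `u / 0 = 0` in Lean, `relEntr u 0 = 0` even for `u > 0`: inequalities need `u ≠ 0 → v ≠ 0`.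
def relEntr (u v : ℝ) : ℝ := u * Real.logb 2 (u / v)

@[simp]
lemma relEntr_zero_left (v : ℝ) : relEntr 0 v = 0 := by simp [relEntr]

lemma relEntr_self (u : ℝ) : relEntr u u = 0 := by
  rcases eq_or_ne u 0 with rfl | hu
  · simp
  · simp [relEntr, div_self hu]

lemma sub_div_log_two_le_relEntr {u v : ℝ} (hu : 0 ≤ u) (hv : 0 ≤ v) (huv : u ≠ 0 → v ≠ 0) :
    (u - v) / Real.log 2 ≤ relEntr u v := by
  have hlog2 : 0 < Real.log 2 := Real.log_pos one_lt_two
  rcases hu.eq_or_lt with rfl | hu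
  · simpa using div_nonpos_of_nonpos_of_nonneg (neg_nonpos.mpr hv) hlog2.le
  have hv : 0 < v := hv.lt_of_ne' (huv hu.ne')
  rw [relEntr, Real.logb, mul_div_assoc', div_le_div_iff_of_pos_right hlog2]
  calc u - v = u * (1 - (u / v)⁻¹) := by field_simp
    _ ≤ u * Real.log (u / v) :=
      mul_le_mul_of_nonneg_left (Real.one_sub_inv_le_log_of_pos (div_pos hu hv)) hu.le

lemma sum_relEntr_nonneg {ι : Type*} (s : Finset ι) {u v : ι → ℝ} (hu : ∀ i, 0 ≤ u i)
    (hv : ∀ i, 0 ≤ v i) (huv : ∀ i, u i ≠ 0 → v i ≠ 0) (hsum : ∑ i ∈ s, v i ≤ ∑ i ∈ s, u i) :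
    0 ≤ ∑ i ∈ s, relEntr (u i) (v i) := by
  calc (0 : ℝ) ≤ (∑ i ∈ s, u i - ∑ i ∈ s, v i) / Real.log 2 :=
        div_nonneg (sub_nonneg.mpr hsum) (Real.log_pos one_lt_two).le
    _ = ∑ i ∈ s, (u i - v i) / Real.log 2 := by rw [← sum_sub_distrib, sum_div]
    _ ≤ ∑ i ∈ s, relEntr (u i) (v i) :=
        sum_le_sum fun i _ => sub_div_log_two_le_relEntr (hu i) (hv i) (huv i)

lemma relEntr_add_le {u₁ u₂ v₁ v₂ : ℝ} (hu₁ : 0 ≤ u₁) (hu₂ : 0 ≤ u₂) (hv₁ : 0 ≤ v₁) (hv₂ : 0 ≤ v₂)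
    (huv₁ : u₁ ≠ 0 → v₁ ≠ 0) (huv₂ : u₂ ≠ 0 → v₂ ≠ 0) :
    relEntr (u₁ + u₂) (v₁ + v₂) ≤ relEntr u₁ v₁ + relEntr u₂ v₂ := by
  rcases (add_nonneg hu₁ hu₂).eq_or_lt with hU | hU
  · obtain ⟨rfl, rfl⟩ : u₁ = 0 ∧ u₂ = 0 := ⟨by linarith, by linarith⟩
    simp
  have hV : v₁ + v₂ ≠ 0 := by
    intro hV
    obtain ⟨rfl, rfl⟩ : u₁ = 0 ∧ u₂ = 0 :=
      ⟨not_not.mp fun h => huv₁ h (by linarith), not_not.mp fun h => huv₂ h (by linarith)⟩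
    simp at hU
  set c := (u₁ + u₂) / (v₁ + v₂) with hc_def
  have hc : 0 < c := div_pos hU ((add_nonneg hv₁ hv₂).lt_of_ne' hV)
  -- Bound each `u log (u / v) - u log c = u log (u / (c v))` below by `u - c v`; the choice of `c`
  -- makes these lower bounds sum to zero.
  have key {u v : ℝ} (hu : 0 ≤ u) (hv : 0 ≤ v) (huv : u ≠ 0 → v ≠ 0) :
      (u - c * v) / Real.log 2 ≤ relEntr u v - u * Real.logb 2 c := by
    have hshift : relEntr u v - u * Real.logb 2 c = relEntr u (c * v) := by
      rcases eq_or_ne u 0 with rfl | hu0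
      · simp
      rw [relEntr, relEntr, ← mul_sub, ← Real.logb_div (div_ne_zero hu0 (huv hu0)) hc.ne',
        div_div, mul_comm v]
    rw [hshift]
    exact sub_div_log_two_le_relEntr hu (by positivity) fun h => mul_ne_zero hc.ne' (huv h)
  have hbal : (u₁ - c * v₁) / Real.log 2 + (u₂ - c * v₂) / Real.log 2 = 0 := by
    rw [← add_div, hc_def]
    field_simp
    ring
  have := add_le_add (key hu₁ hv₁ huv₁) (key hu₂ hv₂ huv₂)
  rw [relEntr, ← hc_def]
  linarith

lemma relEntr_mul_mul_left (c u v : ℝ) : relEntr (c * u) (c * v) = c * relEntr u v := by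
  rcases eq_or_ne c 0 with rfl | hc
  · simp
  · rw [relEntr, relEntr, mul_div_mul_left _ _ hc, mul_assoc]

lemma relEntr_mul_add_mul_le {θ η u₁ u₂ v₁ v₂ : ℝ} (hθ : 0 ≤ θ) (hη : 0 ≤ η)
    (hu₁ : 0 ≤ u₁) (huv₁ : u₁ ≤ v₁) (hu₂ : 0 ≤ u₂) (huv₂ : u₂ ≤ v₂) :
    relEntr (θ * u₁ + η * u₂) (θ * v₁ + η * v₂) ≤ θ * relEntr u₁ v₁ + η * relEntr u₂ v₂ := by
  have hv₁ := hu₁.trans huv₁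
  have hv₂ := hu₂.trans huv₂
  rw [← relEntr_mul_mul_left, ← relEntr_mul_mul_left]
  exact relEntr_add_le (by positivity) (by positivity) (by positivity) (by positivity)
    (fun h => mul_ne_zero (left_ne_zero_of_mul h)
      ((hu₁.lt_of_ne' (right_ne_zero_of_mul h)).trans_le huv₁).ne')
    (fun h => mul_ne_zero (left_ne_zero_of_mul h)
      ((hu₂.lt_of_ne' (right_ne_zero_of_mul h)).trans_le huv₂).ne')

lemma abs_relEntr_le {u v : ℝ} (hu : 0 ≤ u) (huv : u ≤ v) : |relEntr u v| ≤ v / Real.log 2 := by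
  have hlog2 : 0 < Real.log 2 := Real.log_pos one_lt_two
  rcases hu.eq_or_lt with rfl | hu
  · simpa using div_nonneg (hu.trans huv) hlog2.le
  have hnonpos : relEntr u v ≤ 0 :=
    mul_nonpos_of_nonneg_of_nonpos hu.le <| Real.logb_nonpos one_lt_two
      (div_nonneg hu.le (hu.le.trans huv)) ((div_le_one (hu.trans_le huv)).mpr huv)
  have hlow := sub_div_log_two_le_relEntr hu.le (hu.le.trans huv) fun _ => (hu.trans_le huv).ne'
  rw [abs_of_nonpos hnonpos, neg_le]
  calc -(v / Real.log 2) ≤ (u - v) / Real.log 2 := by rw [← neg_div]; gcongr; linarith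
    _ ≤ relEntr u v := hlow

lemma continuousOn_relEntr :
    ContinuousOn (fun z : ℝ × ℝ => relEntr z.1 z.2) {z | 0 ≤ z.1 ∧ z.1 ≤ z.2} := by
  rintro ⟨u, v⟩ ⟨hu, huv⟩
  rcases eq_or_ne v 0 with rfl | hv
  · obtain rfl : u = 0 := le_antisymm huv hu
    refine (squeeze_zero_norm' (a := fun w : ℝ × ℝ => w.2 / Real.log 2) ?_ ?_).trans_eq ?_
    · filter_upwards [self_mem_nhdsWithin] with w hw using abs_relEntr_le hw.1 hw.2
    · simpa using ((continuous_snd.div_const (Real.log 2)).tendsto ((0 : ℝ), (0 : ℝ))).mono_left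
        nhdsWithin_le_nhds
    · simp
  · have hsplit : (fun w : ℝ × ℝ => relEntr w.1 w.2) =ᶠ[nhds (u, v)]
        fun w => (w.1 * Real.log w.1 - w.1 * Real.log w.2) / Real.log 2 := by
      filter_upwards [continuous_snd.continuousAt.eventually_ne hv] with w hw
      rcases eq_or_ne w.1 0 with h | h
      · simp [h]
      · rw [relEntr, Real.logb, Real.log_div h hw]
        ring
    refine (ContinuousAt.congr ?_ hsplit.symm).continuousWithinAt
    exact ((Real.continuous_mul_log.comp continuous_fst).continuousAt.sub
      (continuous_fst.continuousAt.mul (continuous_snd.continuousAt.log hv))).div_const _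

lemma setOf_isCondPMF_eq_pi {α β : Type} [Fintype α] [Fintype β] :
    {P : α → β → ℝ | IsCondPMF P} = Set.univ.pi fun _ => stdSimplex ℝ β := by
  ext P
  simp [IsCondPMF, IsPMF, stdSimplex]

lemma convex_setOf_isCondPMF {α β : Type} [Fintype α] [Fintype β] :
    Convex ℝ {P : α → β → ℝ | IsCondPMF P} := by
  rw [setOf_isCondPMF_eq_pi]
  exact convex_pi fun _ _ => convex_stdSimplex ℝ β

lemma isPMF_pi_single {α : Type} [Fintype α] [DecidableEq α] (a : α) :
    IsPMF (Pi.single a (1 : ℝ)) :=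
  ⟨fun b => by by_cases h : b = a <;> simp [h], by simp⟩

lemma sum_sum_ite_mul {α β : Type} [Fintype α] [Fintype β] [DecidableEq α] (f : β → α)
    (g : β → ℝ) (h : α → ℝ) :
    ∑ a, (∑ b, if f b = a then g b else 0) * h a = ∑ b, g b * h (f b) := by
  simp_rw [sum_mul, ite_mul, zero_mul]
  rw [sum_comm]
  simp

section Marginals

variable {PX : X → ℝ} {PW : A → X → Y → ℝ} {PT : X → Strat Y Xh A → ℝ}

lemma pXYA_eq_pXA_mul (x : X) (y : Y) (a : A) :
    pXYA PX PW PT x y a = pXA PX PT x a * PW a x y := by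
  simp only [pXYA, pXA, pXYT, sum_mul, ite_mul, zero_mul]
  exact sum_congr rfl fun t _ => by split_ifs with h <;> simp [h]

lemma sum_pXYT (hPW : ∀ a x, IsPMF (PW a x)) (x : X) (t : Strat Y Xh A) :
    ∑ y, pXYT PX PW PT x y t = PX x * PT x t := by
  simp [pXYT, ← mul_sum, (hPW t.2 x).2]

lemma sum_pYA (hPW : ∀ a x, IsPMF (PW a x)) (a : A) : ∑ y, pYA PX PW PT y a = pA PX PT a := by
  simp only [pYA, ← pXYA.eq_def, pXYA_eq_pXA_mul]
  rw [sum_comm]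
  simp [← mul_sum, (hPW a _).2, pA, pXA]

lemma pXYT_nonneg (hPX : ∀ x, 0 ≤ PX x) (hPW : ∀ a x, IsPMF (PW a x))
    (hPT : ∀ x t, 0 ≤ PT x t) (x : X) (y : Y) (t : Strat Y Xh A) : 0 ≤ pXYT PX PW PT x y t :=
  mul_nonneg (mul_nonneg (hPX x) (hPT x t)) ((hPW t.2 x).1 y)

variable (hPX : ∀ x, 0 ≤ PX x) (hPW : ∀ a x, IsPMF (PW a x)) (hPT : ∀ x t, 0 ≤ PT x t)
include hPX hPW hPT

lemma pXYA_nonneg (x : X) (y : Y) (a : A) : 0 ≤ pXYA PX PW PT x y a :=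
  sum_nonneg fun t _ => by split_ifs <;> simp [pXYT_nonneg hPX hPW hPT]

lemma pYA_nonneg (y : Y) (a : A) : 0 ≤ pYA PX PW PT y a :=
  sum_nonneg fun x _ => pXYA_nonneg hPX hPW hPT x y a

lemma pYT_nonneg (y : Y) (t : Strat Y Xh A) : 0 ≤ pYT PX PW PT y t :=
  sum_nonneg fun x _ => pXYT_nonneg hPX hPW hPT x y t

lemma pXYT_le_pYT (x : X) (y : Y) (t : Strat Y Xh A) :
    pXYT PX PW PT x y t ≤ pYT PX PW PT y t :=
  single_le_sum (fun x _ => pXYT_nonneg hPX hPW hPT x y t) (mem_univ x)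

lemma pXYT_le_pXYA (x : X) (y : Y) (t : Strat Y Xh A) :
    pXYT PX PW PT x y t ≤ pXYA PX PW PT x y t.2 := by
  have := single_le_sum
    (f := fun t' : Strat Y Xh A => if t'.2 = t.2 then pXYT PX PW PT x y t' else 0)
    (fun t' _ => by split_ifs <;> simp [pXYT_nonneg hPX hPW hPT]) (mem_univ t)
  simpa [pXYA] using this

lemma pXYA_le_pYA (x : X) (y : Y) (a : A) : pXYA PX PW PT x y a ≤ pYA PX PW PT y a :=
  single_le_sum (fun x _ => pXYA_nonneg hPX hPW hPT x y a) (mem_univ x)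

lemma pYA_le_pA (y : Y) (a : A) : pYA PX PW PT y a ≤ pA PX PT a := by
  rw [← sum_pYA hPW]
  exact single_le_sum (fun y _ => pYA_nonneg hPX hPW hPT y a) (mem_univ y)

end Marginals

section Mixtures

variable {PX : X → ℝ} {PW : A → X → Y → ℝ} (P Q : X → Strat Y Xh A → ℝ) (θ η : ℝ)

lemma pXYT_smul_add_smul (x : X) (y : Y) (t : Strat Y Xh A) :
    pXYT PX PW (θ • P + η • Q) x y t = θ * pXYT PX PW P x y t + η * pXYT PX PW Q x y t := by
  simp only [pXYT, Pi.add_apply, Pi.smul_apply, smul_eq_mul]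
  ring

lemma pYT_smul_add_smul (y : Y) (t : Strat Y Xh A) :
    pYT PX PW (θ • P + η • Q) y t = θ * pYT PX PW P y t + η * pYT PX PW Q y t := by
  simp only [pYT, pXYT_smul_add_smul, mul_sum, sum_add_distrib]

lemma pYA_smul_add_smul (y : Y) (a : A) :
    pYA PX PW (θ • P + η • Q) y a = θ * pYA PX PW P y a + η * pYA PX PW Q y a := by
  simp only [pYA, pXYT_smul_add_smul, mul_sum, ← sum_add_distrib]
  exact sum_congr rfl fun x _ => sum_congr rfl fun t _ => by split_ifs <;> simp

lemma pA_smul_add_smul (a : A) :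
    pA PX (θ • P + η • Q) a = θ * pA PX P a + η * pA PX Q a := by
  simp only [pA, mul_sum, ← sum_add_distrib]
  refine sum_congr rfl fun x _ => sum_congr rfl fun t _ => ?_
  split_ifs <;> simp only [Pi.add_apply, Pi.smul_apply, smul_eq_mul, mul_zero, add_zero]
  ring

end Mixtures

section Continuity

variable (PX : X → ℝ) (PW : A → X → Y → ℝ)

lemma continuous_pXYT (x : X) (y : Y) (t : Strat Y Xh A) :
    Continuous fun P : X → Strat Y Xh A → ℝ => pXYT PX PW P x y t := by
  unfold pXYT
  fun_prop

lemma continuous_pYT (y : Y) (t : Strat Y Xh A) :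
    Continuous fun P : X → Strat Y Xh A → ℝ => pYT PX PW P y t :=
  continuous_finsetSum _ fun x _ => continuous_pXYT PX PW x y t

lemma continuous_pYA (y : Y) (a : A) :
    Continuous fun P : X → Strat Y Xh A → ℝ => pYA PX PW P y a :=
  continuous_finsetSum _ fun x _ => continuous_finsetSum _ fun t _ => by
    split_ifs
    exacts [continuous_pXYT PX PW x y t, continuous_const]

lemma continuous_pA (a : A) : Continuous fun P : X → Strat Y Xh A → ℝ => pA PX P a :=
  continuous_finsetSum _ fun x _ => continuous_finsetSum _ fun t _ => by
    split_ifs <;> fun_prop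

end Continuity

def rate (PX : X → ℝ) (PW : A → X → Y → ℝ) (PT : X → Strat Y Xh A → ℝ) : ℝ :=
  IXA PX PT + IXTcondYA PX PW PT

section Rate

variable {PX : X → ℝ} {PW : A → X → Y → ℝ} {PT : X → Strat Y Xh A → ℝ}

lemma IXA_eq_sum_pXYT (hPW : ∀ a x, IsPMF (PW a x)) :
    IXA PX PT = ∑ x, ∑ y, ∑ t, pXYT PX PW PT x y t *
      Real.logb 2 (pXA PX PT x t.2 / (PX x * pA PX PT t.2)) := by
  refine sum_congr rfl fun x _ => ?_
  rw [sum_comm]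
  refine (sum_sum_ite_mul Prod.snd (fun t => PX x * PT x t) _).trans ?_
  simp [← sum_mul, sum_pXYT hPW]

lemma sum_relEntr_pYA_pA :
    ∑ y, ∑ a, relEntr (pYA PX PW PT y a) (pA PX PT a) = ∑ x, ∑ y, ∑ t, pXYT PX PW PT x y t *
      Real.logb 2 (pYA PX PW PT y t.2 / pA PX PT t.2) := by
  conv_rhs => rw [sum_comm]
  refine sum_congr rfl fun y _ => ?_
  have hexpand (a : A) : relEntr (pYA PX PW PT y a) (pA PX PT a) =
      ∑ x, (∑ t, if t.2 = a then pXYT PX PW PT x y t else 0) *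
        Real.logb 2 (pYA PX PW PT y a / pA PX PT a) :=
    sum_mul _ _ _
  simp_rw [hexpand]
  rw [sum_comm]
  exact sum_congr rfl fun x _ => sum_sum_ite_mul Prod.snd (pXYT PX PW PT x y) _

/-- The three sums are `-H(X|Y,T)`, `-H(Y|A)` and `-H(X) - H(Y|X,A)`. -/
lemma rate_eq (hPX : ∀ x, 0 ≤ PX x) (hPW : ∀ a x, IsPMF (PW a x)) (hPT : ∀ x t, 0 ≤ PT x t) :
    rate PX PW PT =
      ∑ x, ∑ y, ∑ t, relEntr (pXYT PX PW PT x y t) (pYT PX PW PT y t)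
      + ∑ y, ∑ a, relEntr (pYA PX PW PT y a) (pA PX PT a)
      - ∑ x, ∑ y, ∑ t, pXYT PX PW PT x y t * Real.logb 2 (PX x * PW t.2 x y) := by
  rw [rate, IXA_eq_sum_pXYT hPW, sum_relEntr_pYA_pA, IXTcondYA]
  simp only [← sum_add_distrib, ← sum_sub_distrib]
  refine sum_congr rfl fun x _ => sum_congr rfl fun y _ => sum_congr rfl fun t _ => ?_
  rcases eq_or_ne (pXYT PX PW PT x y t) 0 with h | h
  · simp [h]
  have hp : 0 < pXYT PX PW PT x y t := (pXYT_nonneg hPX hPW hPT x y t).lt_of_ne' h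
  obtain ⟨⟨hX, -⟩, hW⟩ : (PX x ≠ 0 ∧ PT x t ≠ 0) ∧ PW t.2 x y ≠ 0 := by
    simpa [pXYT, mul_ne_zero_iff] using h
  have hXYA := hp.trans_le (pXYT_le_pXYA hPX hPW hPT x y t)
  have hYA := (hXYA.trans_le (pXYA_le_pYA hPX hPW hPT x y t.2)).ne'
  have hA := ((hXYA.trans_le (pXYA_le_pYA hPX hPW hPT x y t.2)).trans_le
    (pYA_le_pA hPX hPW hPT y t.2)).ne'
  have hYT := (hp.trans_le (pXYT_le_pYT hPX hPW hPT x y t)).ne'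
  rw [pXYA_eq_pXA_mul] at hXYA ⊢
  have hXA := left_ne_zero_of_mul hXYA.ne'
  rw [relEntr, Real.logb_div hXA (mul_ne_zero hX hA), Real.logb_mul hX hA,
    Real.logb_div (mul_ne_zero h hYA) (mul_ne_zero hXYA.ne' hYT), Real.logb_mul h hYA,
    Real.logb_mul (mul_ne_zero hXA hW) hYT, Real.logb_mul hXA hW, Real.logb_div h hYT,
    Real.logb_div hYA hA, Real.logb_mul hX hW]
  ring

lemma convexOn_rate (hPX : ∀ x, 0 ≤ PX x) (hPW : ∀ a x, IsPMF (PW a x)) :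
    ConvexOn ℝ {P | IsCondPMF P} (rate (Xh := Xh) PX PW) := by
  refine ⟨convex_setOf_isCondPMF, ?_⟩
  intro P hP Q hQ θ η hθ hη _
  have hP' (x : X) (t : Strat Y Xh A) : 0 ≤ P x t := (hP x).1 t
  have hQ' (x : X) (t : Strat Y Xh A) : 0 ≤ Q x t := (hQ x).1 t
  have hR' (x : X) (t : Strat Y Xh A) : 0 ≤ (θ • P + η • Q) x t :=
    add_nonneg (mul_nonneg hθ (hP' x t)) (mul_nonneg hη (hQ' x t))
  have hcond : ∑ x, ∑ y, ∑ t, relEntr (pXYT PX PW (θ • P + η • Q) x y t)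
        (pYT PX PW (θ • P + η • Q) y t) ≤
      θ * ∑ x, ∑ y, ∑ t, relEntr (pXYT PX PW P x y t) (pYT PX PW P y t) +
      η * ∑ x, ∑ y, ∑ t, relEntr (pXYT PX PW Q x y t) (pYT PX PW Q y t) := by
    simp only [mul_sum, ← sum_add_distrib, pXYT_smul_add_smul, pYT_smul_add_smul]
    refine sum_le_sum fun x _ => sum_le_sum fun y _ => sum_le_sum fun t _ => ?_
    exact relEntr_mul_add_mul_le hθ hη (pXYT_nonneg hPX hPW hP' x y t)
      (pXYT_le_pYT hPX hPW hP' x y t) (pXYT_nonneg hPX hPW hQ' x y t)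
      (pXYT_le_pYT hPX hPW hQ' x y t)
  have hobs : ∑ y, ∑ a, relEntr (pYA PX PW (θ • P + η • Q) y a) (pA PX (θ • P + η • Q) a) ≤
      θ * ∑ y, ∑ a, relEntr (pYA PX PW P y a) (pA PX P a) +
      η * ∑ y, ∑ a, relEntr (pYA PX PW Q y a) (pA PX Q a) := by
    simp only [mul_sum, ← sum_add_distrib, pYA_smul_add_smul, pA_smul_add_smul]
    refine sum_le_sum fun y _ => sum_le_sum fun a _ => ?_
    exact relEntr_mul_add_mul_le hθ hη (pYA_nonneg hPX hPW hP' y a) (pYA_le_pA hPX hPW hP' y a)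
      (pYA_nonneg hPX hPW hQ' y a) (pYA_le_pA hPX hPW hQ' y a)
  have hlin : ∑ x, ∑ y, ∑ t, pXYT PX PW (θ • P + η • Q) x y t * Real.logb 2 (PX x * PW t.2 x y) =
      θ * ∑ x, ∑ y, ∑ t, pXYT PX PW P x y t * Real.logb 2 (PX x * PW t.2 x y) +
      η * ∑ x, ∑ y, ∑ t, pXYT PX PW Q x y t * Real.logb 2 (PX x * PW t.2 x y) := by
    simp only [mul_sum, ← sum_add_distrib, pXYT_smul_add_smul, add_mul, mul_assoc]
  rw [rate_eq hPX hPW hR', rate_eq hPX hPW hP', rate_eq hPX hPW hQ', smul_eq_mul, smul_eq_mul]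
  linear_combination hcond + hobs - hlin

lemma continuousOn_rate (hPX : ∀ x, 0 ≤ PX x) (hPW : ∀ a x, IsPMF (PW a x)) :
    ContinuousOn (rate (Xh := Xh) PX PW) {P | IsCondPMF P} := by
  refine ContinuousOn.congr ?_ fun P hP => rate_eq hPX hPW fun x t => (hP x).1 t
  refine ((continuousOn_finsetSum _ fun x _ => continuousOn_finsetSum _ fun y _ =>
    continuousOn_finsetSum _ fun t _ => ?_).add (continuousOn_finsetSum _ fun y _ =>
    continuousOn_finsetSum _ fun a _ => ?_)).sub (Continuous.continuousOn ?_)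
  · exact continuousOn_relEntr.comp
      ((continuous_pXYT PX PW x y t).prodMk (continuous_pYT PX PW y t)).continuousOn
      fun P hP => ⟨pXYT_nonneg hPX hPW (fun x t => (hP x).1 t) x y t,
        pXYT_le_pYT hPX hPW (fun x t => (hP x).1 t) x y t⟩
  · exact continuousOn_relEntr.comp
      ((continuous_pYA PX PW y a).prodMk (continuous_pA PX a)).continuousOn
      fun P hP => ⟨pYA_nonneg hPX hPW (fun x t => (hP x).1 t) y a,
        pYA_le_pA hPX hPW (fun x t => (hP x).1 t) y a⟩
  · exact continuous_finsetSum _ fun x _ => continuous_finsetSum _ fun y _ =>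
      continuous_finsetSum _ fun t _ => (continuous_pXYT PX PW x y t).mul continuous_const

lemma IXA_nonneg (hPX : IsPMF PX) (hPT : ∀ x t, 0 ≤ PT x t) : 0 ≤ IXA PX PT := by
  have hXA (x : X) (a : A) : 0 ≤ pXA PX PT x a :=
    sum_nonneg fun t _ => by split_ifs <;> simp [mul_nonneg (hPX.1 x) (hPT x t)]
  have hXA_le (x : X) (a : A) : pXA PX PT x a ≤ pA PX PT a :=
    single_le_sum (fun x _ => hXA x a) (mem_univ x)
  change 0 ≤ ∑ x, ∑ a, relEntr (pXA PX PT x a) (PX x * pA PX PT a)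
  rw [sum_comm]
  refine sum_nonneg fun a _ => sum_relEntr_nonneg _ (fun x => hXA x a)
    (fun x => mul_nonneg (hPX.1 x) ((hXA x a).trans (hXA_le x a))) (fun x h => ?_) ?_
  · refine mul_ne_zero (fun hx => h ?_) ((((hXA x a).lt_of_ne' h).trans_le (hXA_le x a)).ne')
    simp [pXA, hx]
  · rw [← sum_mul, hPX.2, one_mul]
    rfl

lemma IXTcondYA_nonneg (hPX : ∀ x, 0 ≤ PX x) (hPW : ∀ a x, IsPMF (PW a x))
    (hPT : ∀ x t, 0 ≤ PT x t) : 0 ≤ IXTcondYA PX PW PT := by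
  have hsplit : IXTcondYA PX PW PT = ∑ y, ∑ t, ∑ x, relEntr (pXYT PX PW PT x y t)
      (pXYA PX PW PT x y t.2 * pYT PX PW PT y t / pYA PX PW PT y t.2) := by
    rw [IXTcondYA, sum_comm]
    refine sum_congr rfl fun y _ => ?_
    rw [sum_comm]
    simp only [relEntr, div_div_eq_mul_div]
  rw [hsplit]
  refine sum_nonneg fun y _ => sum_nonneg fun t _ => sum_relEntr_nonneg _
    (fun x => pXYT_nonneg hPX hPW hPT x y t)
    (fun x => div_nonneg (mul_nonneg (pXYA_nonneg hPX hPW hPT x y t.2) (pYT_nonneg hPX hPW hPT y t))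
      (pYA_nonneg hPX hPW hPT y t.2)) (fun x h => ?_) ?_
  · have hp := (pXYT_nonneg hPX hPW hPT x y t).lt_of_ne' h
    have hXYA := hp.trans_le (pXYT_le_pXYA hPX hPW hPT x y t)
    exact div_ne_zero (mul_ne_zero hXYA.ne' (hp.trans_le (pXYT_le_pYT hPX hPW hPT x y t)).ne')
      (hXYA.trans_le (pXYA_le_pYA hPX hPW hPT x y t.2)).ne'
  · -- `∑ x, pXYA x y a` is `pYA y a` by definition, so the weights sum to `pYT y t` or to `0`.
    rw [← sum_div, ← sum_mul]
    change pYA PX PW PT y t.2 * pYT PX PW PT y t / pYA PX PW PT y t.2 ≤ pYT PX PW PT y t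
    rcases eq_or_ne (pYA PX PW PT y t.2) 0 with h | h
    · simpa [h] using pYT_nonneg hPX hPW hPT y t
    · rw [mul_div_cancel_left₀ _ h]

lemma rate_nonneg (hPX : IsPMF PX) (hPW : ∀ a x, IsPMF (PW a x)) (hPT : ∀ x t, 0 ≤ PT x t) :
    0 ≤ rate PX PW PT :=
  add_nonneg (IXA_nonneg hPX hPT) (IXTcondYA_nonneg hPX.1 hPW hPT)

lemma rate_const_eq_zero (hPX : IsPMF PX) (pT : Strat Y Xh A → ℝ) :
    rate PX PW (fun _ : X => pT) = 0 := by
  have hXA (x : X) (a : A) : pXA PX (fun _ => pT) x a = PX x * pA PX (fun _ => pT) a := by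
    simp only [pA, pXA, ← mul_ite_zero, ← mul_sum, ← sum_mul, hPX.2, one_mul]
  have hXYT (x : X) (y : Y) (t : Strat Y Xh A) :
      pXYT PX PW (fun _ => pT) x y t * pYA PX PW (fun _ => pT) y t.2 =
        pXYA PX PW (fun _ => pT) x y t.2 * pYT PX PW (fun _ => pT) y t := by
    change _ * ∑ x', pXYA PX PW _ x' y t.2 = _
    simp only [pXYA_eq_pXA_mul, hXA, pYT, pXYT, mul_sum]
    exact sum_congr rfl fun x' _ => by ring
  have hIXA : IXA PX (fun _ => pT) = 0 :=
    sum_eq_zero fun x _ => sum_eq_zero fun a _ => by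
      change relEntr _ _ = 0
      rw [hXA, relEntr_self]
  have hIXT : IXTcondYA PX PW (fun _ => pT) = 0 :=
    sum_eq_zero fun x _ => sum_eq_zero fun y _ => sum_eq_zero fun t _ => by
      rw [hXYT]
      rcases eq_or_ne (pXYA PX PW (fun _ => pT) x y t.2 * pYT PX PW (fun _ => pT) y t) 0 with h | h
      · simp [h]
      · simp [div_self h]
  rw [rate, hIXA, hIXT, add_zero]

end Rate

section DistortionCost

variable {PX : X → ℝ} {PW : A → X → Y → ℝ} {dist : X → Xh → ℝ} {cost : A → ℝ}

lemma expDist_smul_add_smul (P Q : X → Strat Y Xh A → ℝ) (θ η : ℝ) :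
    expDist PX PW dist (θ • P + η • Q) = θ * expDist PX PW dist P + η * expDist PX PW dist Q := by
  simp only [expDist, mul_sum, ← sum_add_distrib, pXYT_smul_add_smul, add_mul, mul_assoc]

lemma expCost_smul_add_smul (P Q : X → Strat Y Xh A → ℝ) (θ η : ℝ) :
    expCost PX cost (θ • P + η • Q) = θ * expCost PX cost P + η * expCost PX cost Q := by
  simp only [expCost, mul_sum, ← sum_add_distrib, Pi.add_apply, Pi.smul_apply, smul_eq_mul]
  exact sum_congr rfl fun x _ => sum_congr rfl fun t _ => by ring

lemma expDist_const (pT : Strat Y Xh A → ℝ) :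
    expDist PX PW dist (fun _ : X => pT) =
      ∑ t, ∑ x, ∑ y, PX x * pT t * PW t.2 x y * dist x (t.1 y) := by
  simp only [expDist, pXYT]
  exact (sum_congr rfl fun x _ => sum_comm).trans sum_comm

lemma expCost_const (hPX : IsPMF PX) (pT : Strat Y Xh A → ℝ) :
    expCost PX cost (fun _ : X => pT) = ∑ t, cost t.2 * pT t := by
  simp only [expCost, mul_assoc, ← mul_sum, ← sum_mul, hPX.2, one_mul]
  exact sum_congr rfl fun t _ => mul_comm _ _

lemma Dmax_le_expDist_const (hPX : ∀ x, 0 ≤ PX x) (hPW : ∀ a x, IsPMF (PW a x))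
    (hdist : ∀ x xh, 0 ≤ dist x xh) {C : ℝ} {pT : Strat Y Xh A → ℝ} (hpT : IsPMF pT)
    (hcost : ∑ t, cost t.2 * pT t ≤ C) :
    Dmax PX PW dist cost C ≤ expDist PX PW dist (fun _ : X => pT) := by
  rw [expDist_const]
  refine csInf_le ⟨0, ?_⟩ ⟨pT, hpT, hcost, rfl⟩
  rintro v ⟨pT', hpT', -, rfl⟩
  exact sum_nonneg fun t _ => sum_nonneg fun x _ => sum_nonneg fun y _ =>
    mul_nonneg (mul_nonneg (mul_nonneg (hPX x) (hpT'.1 t)) ((hPW t.2 x).1 y)) (hdist x (t.1 y))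

lemma exists_expDist_eq_rate_le (hPX : IsPMF PX) (hPW : ∀ a x, IsPMF (PW a x))
    {P : X → Strat Y Xh A → ℝ} (hP : IsCondPMF P) {pT : Strat Y Xh A → ℝ} (hpT : IsPMF pT)
    {D C : ℝ} (hP_dist : expDist PX PW dist P ≤ D) (hpT_dist : D ≤ expDist PX PW dist fun _ => pT)
    (hP_cost : expCost PX cost P ≤ C) (hpT_cost : ∑ t, cost t.2 * pT t ≤ C) :
    ∃ R, IsCondPMF R ∧ expDist PX PW dist R = D ∧ expCost PX cost R ≤ C ∧
      rate PX PW R ≤ rate PX PW P := by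
  obtain ⟨θ, η, hθ, hη, hθη, hmix⟩ :
      D ∈ segment ℝ (expDist PX PW dist P) (expDist PX PW dist fun _ => pT) := by
    rw [segment_eq_Icc (hP_dist.trans hpT_dist)]
    exact ⟨hP_dist, hpT_dist⟩
  refine ⟨θ • P + η • fun _ => pT, convex_setOf_isCondPMF hP (fun _ => hpT) hθ hη hθη,
    by rwa [expDist_smul_add_smul], ?_, ?_⟩
  · rw [expCost_smul_add_smul, expCost_const hPX]
    calc θ * expCost PX cost P + η * ∑ t, cost t.2 * pT t ≤ θ * C + η * C := by gcongr
      _ = C := by rw [← add_mul, hθη, one_mul]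
  · calc rate PX PW (θ • P + η • fun _ => pT)
        ≤ θ * rate PX PW P + η * rate PX PW fun _ => pT :=
          (convexOn_rate hPX.1 hPW).2 hP (fun _ => hpT) hθ hη hθη
      _ = θ * rate PX PW P := by rw [rate_const_eq_zero hPX, mul_zero, add_zero]
      _ ≤ rate PX PW P :=
          mul_le_of_le_one_left (rate_nonneg hPX hPW fun x t => (hP x).1 t) (by linarith)

lemma exists_isCondPMF_expDist_eq_zero (hdist0 : ∀ x, ∃ xh, dist x xh = 0) {a₀ : A}
    (ha₀ : cost a₀ = 0) :
    ∃ P : X → Strat Y Xh A → ℝ, IsCondPMF P ∧ expDist PX PW dist P = 0 ∧ expCost PX cost P = 0 := by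
  choose xh hxh using hdist0
  refine ⟨fun x => Pi.single (fun _ => xh x, a₀) 1, fun x => isPMF_pi_single _, ?_, ?_⟩
  · simp [expDist, pXYT, Pi.single_apply, hxh]
  · simp [expCost, Pi.single_apply, ha₀]

lemma isCompact_feasible (D C : ℝ) :
    IsCompact {P : X → Strat Y Xh A → ℝ |
      IsCondPMF P ∧ expDist PX PW dist P ≤ D ∧ expCost PX cost P ≤ C} := by
  have hdist_cont : Continuous fun P : X → Strat Y Xh A → ℝ => expDist PX PW dist P :=
    continuous_finsetSum _ fun x _ => continuous_finsetSum _ fun y _ =>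
      continuous_finsetSum _ fun t _ => (continuous_pXYT PX PW x y t).mul continuous_const
  have hcost_cont : Continuous fun P : X → Strat Y Xh A → ℝ => expCost PX cost P := by
    unfold expCost
    fun_prop
  rw [Set.ofPred_and, Set.ofPred_and, setOf_isCondPMF_eq_pi]
  exact (isCompact_univ_pi fun _ => isCompact_stdSimplex ℝ _).inter_right
    ((isClosed_le hdist_cont continuous_const).inter (isClosed_le hcost_cont continuous_const))

end DistortionCost

theorem RDC_attained_with_distortion_equality_general
    {X Y A Xh : Type} [Fintype X] [Fintype Y] [Fintype A] [Fintype Xh]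
    [DecidableEq X] [DecidableEq Y] [DecidableEq A] [DecidableEq Xh]
    [Nonempty Xh]
    (PX : X → ℝ) (PW : A → X → Y → ℝ) (dist : X → Xh → ℝ) (cost : A → ℝ)
    (hPX : IsPMF PX)
    (hPW : ∀ a x, IsPMF (PW a x))
    (hdist : ∀ x xh, 0 ≤ dist x xh) (hdist0 : ∀ x, ∃ xh, dist x xh = 0)
    (hcost0 : ∃ a, cost a = 0)
    (C D : ℝ) (hC : 0 ≤ C) (hD : 0 ≤ D) (hDmax : D ≤ Dmax PX PW dist cost C) :
    ∃ PT : X → Strat Y Xh A → ℝ, IsCondPMF PT ∧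
      expDist PX PW dist PT = D ∧ expCost PX cost PT ≤ C ∧
      IXA PX PT + IXTcondYA PX PW PT = RDC PX PW dist cost D C := by
  obtain ⟨a₀, ha₀⟩ := hcost0
  obtain ⟨P₀, hP₀, hP₀_dist, hP₀_cost⟩ :=
    exists_isCondPMF_expDist_eq_zero (PX := PX) (PW := PW) hdist0 ha₀
  obtain ⟨P, hP, hP_min⟩ := (isCompact_feasible D C).exists_isMinOn
    ⟨P₀, hP₀, hP₀_dist ▸ hD, hP₀_cost ▸ hC⟩ ((continuousOn_rate hPX.1 hPW).mono fun P hP => hP.1)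
  set pT : Strat Y Xh A → ℝ := Pi.single (fun _ => Classical.arbitrary Xh, a₀) 1
  have hpT : IsPMF pT := isPMF_pi_single _
  have hpT_cost : ∑ t, cost t.2 * pT t ≤ C := by simpa [pT, Pi.single_apply, ha₀] using hC
  obtain ⟨R, hR, hR_dist, hR_cost, hR_rate⟩ := exists_expDist_eq_rate_le hPX hPW hP.1 hpT hP.2.1
    (hDmax.trans (Dmax_le_expDist_const hPX.1 hPW hdist hpT hpT_cost)) hP.2.2 hpT_cost
  refine ⟨R, hR, hR_dist, hR_cost,
    .symm <| IsLeast.csInf_eq ⟨⟨R, hR, hR_dist.le, hR_cost, rfl⟩, ?_⟩⟩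
  rintro r ⟨Q, hQ, hQ_dist, hQ_cost, rfl⟩
  exact hR_rate.trans (hP_min ⟨hQ, hQ_dist, hQ_cost⟩)

/-- For every `C ≥ 0` and every `D ∈ [0, D_max(C)]`, the minimum
defining `R(D,C)` is attained by a conditional pmf `P_{T|X}` meeting the distortion
constraint with equality. -/
theorem RDC_attained_with_distortion_equality
    {X Y A Xh : Type} [Fintype X] [Fintype Y] [Fintype A] [Fintype Xh]
    [DecidableEq X] [DecidableEq Y] [DecidableEq A] [DecidableEq Xh]
    [Nonempty X] [Nonempty Y] [Nonempty A] [Nonempty Xh]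
    (PX : X → ℝ) (PW : A → X → Y → ℝ) (dist : X → Xh → ℝ) (cost : A → ℝ)
    (hPX : IsPMF PX) (hPXpos : ∀ x, 0 < PX x)
    (hPW : ∀ a x, IsPMF (PW a x))
    (hdist : ∀ x xh, 0 ≤ dist x xh) (hdist0 : ∀ x, ∃ xh, dist x xh = 0)
    (hcost : ∀ a, 0 ≤ cost a) (hcost0 : ∃ a, cost a = 0)
    (C D : ℝ) (hC : 0 ≤ C) (hD : 0 ≤ D) (hDmax : D ≤ Dmax PX PW dist cost C) :
    ∃ PT : X → Strat Y Xh A → ℝ, IsCondPMF PT ∧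
      expDist PX PW dist PT = D ∧ expCost PX cost PT ≤ C ∧
      IXA PX PT + IXTcondYA PX PW PT = RDC PX PW dist cost D C :=
  RDC_attained_with_distortion_equality_general PX PW dist cost hPX hPW hdist hdist0 hcost0 C D hC
    hD hDmax
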